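/- A directed acyclic graph is Markov equivalent to some undirected graph if and only if it contains no unshielded collision V-configuration (v-structure). -/

import Mathlib

/-- A loopless mixed graph with three kinds of edges: lines (undirected),
arrows (directed, `arrow i j` means `i → j`), and arcs (bidirected). -/
structure MixedGraph (V : Type*) where
  line : V → V → Prop
  arrow : V → V → Prop
  arc : V → V → Prop
  line_symm : ∀ i j, line i j → line j i
  arc_symm : ∀ i j, arc i j → arc j i
  line_irrefl : ∀ i, ¬ line i i
  arrow_irrefl : ∀ i, ¬ arrow i i
  arc_irrefl : ∀ i, ¬ arc i i

namespace MixedGraph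

variable {V : Type*}

/-- `i` and `j` are adjacent (joined by some edge). -/
def adj (G : MixedGraph V) (i j : V) : Prop :=
  G.line i j ∨ G.arrow i j ∨ G.arrow j i ∨ G.arc i j

/-- There is an edge between `i` and `j` with an arrowhead pointing at `j`. -/
def headAt (G : MixedGraph V) (i j : V) : Prop :=
  G.arrow i j ∨ G.arc i j

/-- `j` is a collider on the V-configuration `⟨i, j, k⟩`. -/
def collider (G : MixedGraph V) (i j k : V) : Prop :=
  G.headAt i j ∧ G.headAt k j

/-- `i` is an ancestor of `j` (a direction-preserving path of arrows from `i` to `j`). -/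
def anc (G : MixedGraph V) (i j : V) : Prop :=
  Relation.ReflTransGen G.arrow i j

/-- A path: a list of pairwise distinct nodes, consecutive ones adjacent. -/
def isPath (G : MixedGraph V) (p : List V) : Prop :=
  p.Nodup ∧ List.Chain' G.adj p

/-- Inner-node condition for an `m`-connecting path given `C`:
every collider inner node is in `C` or an ancestor of a node of `C`,
every non-collider inner node is outside `C`. -/
def innerOK (G : MixedGraph V) (C : Set V) : List V → Prop
  | a :: b :: c :: rest =>
      ((G.collider a b c → b ∈ C ∨ ∃ x ∈ C, G.anc b x) ∧
        (¬ G.collider a b c → b ∉ C)) ∧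
      innerOK G C (b :: c :: rest)
  | _ => True

/-- `p` is an `m`-connecting path between `i` and `j` given `C`. -/
def mConnecting (G : MixedGraph V) (C : Set V) (i j : V) (p : List V) : Prop :=
  G.isPath p ∧ 2 ≤ p.length ∧ p.head? = some i ∧ p.getLast? = some j ∧
    G.innerOK C p

/-- `A` is `m`-separated from `B` given `C`. -/
def mSep (G : MixedGraph V) (A B C : Set V) : Prop :=
  ¬ ∃ (i j : V) (p : List V), i ∈ A ∧ j ∈ B ∧ G.mConnecting C i j p

/-- Two mixed graphs on the same node set are Markov equivalent if they induce
exactly the same `m`-separation statements among disjoint sets. -/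
def markovEquiv (G₁ G₂ : MixedGraph V) : Prop :=
  ∀ A B C : Set V, Disjoint A B → Disjoint A C → Disjoint B C →
    (G₁.mSep A B C ↔ G₂.mSep A B C)

/-- An undirected graph: only line edges. -/
def isUG (G : MixedGraph V) : Prop :=
  (∀ i j, ¬ G.arrow i j) ∧ (∀ i j, ¬ G.arc i j)

/-- A bidirected graph: only arc edges. -/
def isBG (G : MixedGraph V) : Prop :=
  (∀ i j, ¬ G.arrow i j) ∧ (∀ i j, ¬ G.line i j)

/-- A directed acyclic graph: only arrows, and no directed cycle. -/
def isDAG (G : MixedGraph V) : Prop :=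
  (∀ i j, ¬ G.line i j) ∧ (∀ i j, ¬ G.arc i j) ∧ ∀ i, ¬ Relation.TransGen G.arrow i i

/-- An ancestral graph: no node is an ancestor of one of its parents or spouses,
and no arrowhead points at a node having a neighbour. -/
def isAncestral (G : MixedGraph V) : Prop :=
  (∀ i j, (G.arrow j i ∨ G.arc j i) → ¬ G.anc i j) ∧
  (∀ i j k, G.line i j → ¬ G.headAt k i)

/-- Maximality: every pair of distinct non-adjacent nodes can be `m`-separated. -/
def isMaximal (G : MixedGraph V) : Prop :=
  ∀ i j, i ≠ j → ¬ G.adj i j → ∃ C : Set V, i ∉ C ∧ j ∉ C ∧ G.mSep {i} {j} C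

/-- A maximal ancestral graph. -/
def isMAG (G : MixedGraph V) : Prop :=
  G.isAncestral ∧ G.isMaximal

/-- Two graphs have the same skeleton. -/
def sameSkeleton (G₁ G₂ : MixedGraph V) : Prop :=
  ∀ i j, G₁.adj i j ↔ G₂.adj i j

/-- An unshielded collider V-configuration `⟨i, j, k⟩`. -/
def unshieldedCollider (G : MixedGraph V) (i j k : V) : Prop :=
  G.collider i j k ∧ i ≠ k ∧ ¬ G.adj i k

end MixedGraph

namespace MixedGraph
variable {V : Type*}

/-- An unshielded collision V-configuration `i → j ← k` with `i, k` non-adjacent. -/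
def unshieldedCollision (G : MixedGraph V) (i j k : V) : Prop :=
  G.arrow i j ∧ G.arrow k j ∧ i ≠ k ∧ ¬ G.adj i k

end MixedGraph

/-!
If a DAG has an unshielded collision `i → j ← k`, where (say) `k` is not an ancestor of `i`,
then the parents of `k` separate `k` from `i`. They do not contain `j`, so in an undirected
graph with the same skeleton the path `k - j - i` still connects the two nodes.

Conversely, if every collision `a → b ← c` is shielded, a collider on a connecting path can be
bypassed through the edge `a - c`: both `a` and `c` are then ancestors of the conditioning set,
so the shortened path is still connecting. Hence the shortest connecting paths have no
colliders, and `m`-connection in the DAG is connection in its skeleton by paths whose inner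
nodes avoid the conditioning set.
-/

namespace List

variable {α : Type*}

def IsTripleChain (Q : α → α → α → Prop) : List α → Prop
  | a :: b :: c :: l => Q a b c ∧ IsTripleChain Q (b :: c :: l)
  | _ => True

variable {Q Q₁ Q₂ : α → α → α → Prop}

theorem IsTripleChain.tail {x : α} :
    ∀ {l : List α}, IsTripleChain Q (x :: l) → IsTripleChain Q l
  | [], _ | [_], _ => trivial
  | _ :: _ :: _, h => h.2

theorem IsTripleChain.imp₂ (h : ∀ a b c, Q₁ a b c → Q₂ a b c → Q a b c) :
    ∀ {l : List α}, IsTripleChain Q₁ l → IsTripleChain Q₂ l → IsTripleChain Q l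
  | [], _, _ | [_], _, _ | [_, _], _, _ => trivial
  | _ :: _ :: _ :: _, h₁, h₂ => ⟨h _ _ _ h₁.1 h₂.1, imp₂ h h₁.2 h₂.2⟩

theorem IsTripleChain.imp (h : ∀ a b c, Q₁ a b c → Q a b c) {l : List α}
    (hl : IsTripleChain Q₁ l) : IsTripleChain Q l :=
  hl.imp₂ (fun a b c h₁ _ => h a b c h₁) hl

theorem exists_eq_append_of_not_isTripleChain :
    ∀ {l : List α}, ¬ IsTripleChain Q l →
      ∃ u a b c v, l = u ++ a :: b :: c :: v ∧ ¬ Q a b c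
  | [], h | [_], h | [_, _], h => absurd trivial h
  | a :: b :: c :: l, h => by
    by_cases hQ : Q a b c
    · obtain ⟨u, a', b', c', v, he, hQ'⟩ :=
        exists_eq_append_of_not_isTripleChain fun hl => h ⟨hQ, hl⟩
      exact ⟨a :: u, a', b', c', v, by rw [he, cons_append], hQ'⟩
    · exact ⟨[], a, b, c, l, rfl, hQ⟩

theorem IsTripleChain.of_append_cons_cons_cons {a b c : α} {v : List α} :
    ∀ {u : List α}, IsTripleChain Q (u ++ a :: b :: c :: v) → Q a b c
  | [], h => h.1
  | _ :: _, h => of_append_cons_cons_cons h.tail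

theorem IsTripleChain.shortcut {a b c : α} {v : List α}
    (hl : ∀ x, Q x a b → Q x a c) (hr : ∀ d, Q b c d → Q a c d) :
    ∀ {u : List α}, IsTripleChain Q (u ++ a :: b :: c :: v) →
      IsTripleChain Q (u ++ a :: c :: v)
  | [], h => by
    cases v with
    | nil => trivial
    | cons d v => exact ⟨hr d h.2.1, h.2.2⟩
  | [x], h => ⟨hl x h.1, shortcut hl hr (u := []) h.2⟩
  | [_, y], h => ⟨h.1, shortcut hl hr (u := [y]) h.2⟩
  | _ :: y :: z :: u, h => ⟨h.1, shortcut hl hr (u := y :: z :: u) h.2⟩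

theorem exists_isTripleChain_of_shortcut {P : List α → Prop}
    (hP : ∀ u a b c v, P (u ++ a :: b :: c :: v) → ¬ Q a b c → P (u ++ a :: c :: v))
    (l : List α) (hl : P l) : ∃ l', P l' ∧ IsTripleChain Q l' := by
  by_cases h : IsTripleChain Q l
  · exact ⟨l, hl, h⟩
  · obtain ⟨u, a, b, c, v, rfl, hQ⟩ := exists_eq_append_of_not_isTripleChain h
    exact exists_isTripleChain_of_shortcut hP _ (hP u a b c v hl hQ)
termination_by l.length
decreasing_by simp_all

end List

namespace MixedGraph

variable {V : Type*} {G U : MixedGraph V} {C : Set V} {i j k a b c : V}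

open List

theorem adj_symm (h : G.adj i j) : G.adj j i := by
  rcases h with h | h | h | h
  · exact Or.inl (G.line_symm _ _ h)
  · exact Or.inr (Or.inr (Or.inl h))
  · exact Or.inr (Or.inl h)
  · exact Or.inr (Or.inr (Or.inr (G.arc_symm _ _ h)))

theorem adj_irrefl (G : MixedGraph V) (i : V) : ¬ G.adj i i := by
  rintro (h | h | h | h)
  exacts [G.line_irrefl i h, G.arrow_irrefl i h, G.arrow_irrefl i h, G.arc_irrefl i h]

theorem ne_of_adj (h : G.adj i j) : i ≠ j := by
  rintro rfl
  exact G.adj_irrefl i h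

theorem isPath_iff {p : List V} : G.isPath p ↔ p.Nodup ∧ p.IsChain G.adj := Iff.rfl

def isPathBetween (G : MixedGraph V) (i j : V) (p : List V) : Prop :=
  G.isPath p ∧ 2 ≤ p.length ∧ p.head? = some i ∧ p.getLast? = some j

theorem isPathBetween_congr_adj {G' : MixedGraph V} (h : G.adj = G'.adj) {p : List V} :
    G.isPathBetween i j p ↔ G'.isPathBetween i j p := by
  simp only [isPathBetween, isPath_iff, h]

theorem isPathBetween.shortcut {u v : List V} (hp : G.isPathBetween i j (u ++ a :: b :: c :: v))
    (hac : G.adj a c) : G.isPathBetween i j (u ++ a :: c :: v) := by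
  obtain ⟨hpath, -, hi, hj⟩ := hp
  obtain ⟨hnd, hch⟩ := isPath_iff.mp hpath
  refine ⟨isPath_iff.mpr ⟨?_, ?_⟩, by simp; omega, by cases u <;> simpa using hi,
    by simpa using hj⟩
  · exact ((sublist_cons_self b _).cons_cons a).append_left u |>.nodup hnd
  · simp_all

def activeTriple (G : MixedGraph V) (C : Set V) (a b c : V) : Prop :=
  (G.collider a b c → b ∈ C ∨ ∃ x ∈ C, G.anc b x) ∧ (¬ G.collider a b c → b ∉ C)

theorem innerOK_iff_isTripleChain :
    ∀ {p : List V}, G.innerOK C p ↔ p.IsTripleChain (G.activeTriple C)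
  | [] | [_] | [_, _] => Iff.rfl
  | _ :: _ :: _ :: _ => and_congr_right' innerOK_iff_isTripleChain

theorem mConnecting_iff {p : List V} :
    G.mConnecting C i j p ↔ G.isPathBetween i j p ∧ p.IsTripleChain (G.activeTriple C) := by
  simp only [mConnecting, isPathBetween, innerOK_iff_isTripleChain, and_assoc]

theorem not_mSep_of_adj (h : G.adj i j) (C : Set V) : ¬ G.mSep {i} {j} C := fun hsep =>
  hsep ⟨i, j, [i, j], rfl, rfl,
    isPath_iff.mpr ⟨by simp [ne_of_adj h], by simpa using h⟩, le_rfl, rfl, rfl, trivial⟩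

theorem isPathBetween.exists_eq_cons_cons {p : List V} (hp : G.isPathBetween i j p) :
    ∃ y t, p = i :: y :: t := by
  obtain ⟨-, hlen, hi, -⟩ := hp
  rcases p with _ | ⟨x, _ | ⟨y, t⟩⟩
  · simp at hlen
  · simp at hlen
  · obtain rfl : x = i := by simpa using hi
    exact ⟨y, t, rfl⟩

theorem activeTriple.exists_anc (h : G.activeTriple C a b c) (hc : G.collider a b c) :
    ∃ y ∈ C, G.anc b y := by
  rcases h.1 hc with hb | hy
  exacts [⟨b, hb, .refl⟩, hy]

theorem markovEquiv.mSep_singleton_iff (h : G.markovEquiv U) (hij : i ≠ j) (hi : i ∉ C)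
    (hj : j ∉ C) : G.mSep {i} {j} C ↔ U.mSep {i} {j} C :=
  h _ _ _ (Set.disjoint_singleton.mpr hij) (Set.disjoint_singleton_left.mpr hi)
    (Set.disjoint_singleton_left.mpr hj)

theorem isUG.not_collider (hU : U.isUG) : ¬ U.collider a b c := by
  rintro ⟨h | h, -⟩
  exacts [hU.1 a b h, hU.2 a b h]

theorem isUG.mConnecting_iff (hU : U.isUG) {p : List V} :
    U.mConnecting C i j p ↔ U.isPathBetween i j p ∧ p.IsTripleChain (fun _ b _ => b ∉ C) := by
  rw [MixedGraph.mConnecting_iff]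
  exact and_congr_right' ⟨IsTripleChain.imp fun _ _ _ h => h.2 hU.not_collider,
    IsTripleChain.imp fun _ _ _ h => ⟨fun hc => absurd hc hU.not_collider, fun _ => h⟩⟩

theorem isUG.mSep_compl (hU : U.isUG) (h : ¬ U.adj i j) : U.mSep {i} {j} {i, j}ᶜ := by
  rintro ⟨i', j', p, hi', hj', hp⟩
  simp only [Set.mem_singleton_iff] at hi' hj'
  subst i' j'
  obtain ⟨hpath, hact⟩ := hU.mConnecting_iff.mp hp
  obtain ⟨y, t, rfl⟩ := hpath.exists_eq_cons_cons
  obtain ⟨hp', -, -, hj⟩ := hpath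
  obtain ⟨hnd, hch⟩ := isPath_iff.mp hp'
  cases t with
  | nil =>
    obtain rfl : y = j := by simpa using hj
    exact h (isChain_cons_cons.mp hch).1
  | cons z t =>
    have hy : y = i ∨ y = j := or_iff_not_imp_left.mpr (by simpa using hact.1)
    rcases hy with rfl | rfl
    · simp at hnd
    · exact (nodup_cons.mp (nodup_cons.mp hnd).2).1 (mem_of_getLast? (by simpa using hj))

theorem markovEquiv.adj_of_isUG (h : G.markovEquiv U) (hU : U.isUG) (hij : G.adj i j) :
    U.adj i j := by
  by_contra hU'
  refine G.not_mSep_of_adj hij _ ((h.mSep_singleton_iff (ne_of_adj hij) ?_ ?_).mpr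
    (hU.mSep_compl hU')) <;> simp

theorem unshieldedCollision.symm (h : G.unshieldedCollision i j k) :
    G.unshieldedCollision k j i :=
  ⟨h.2.1, h.1, h.2.2.1.symm, fun h' => h.2.2.2 (adj_symm h')⟩

theorem isDAG.adj_iff (hG : G.isDAG) : G.adj i j ↔ G.arrow i j ∨ G.arrow j i := by
  have := hG.1 i j
  have := hG.2.1 i j
  unfold adj
  tauto

theorem isDAG.collider_iff (hG : G.isDAG) : G.collider a b c ↔ G.arrow a b ∧ G.arrow c b := by
  simp only [collider, headAt, hG.2.1, or_false]

theorem isDAG.arrow_asymm (hG : G.isDAG) (h : G.arrow i j) : ¬ G.arrow j i :=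
  fun h' => hG.2.2 i (.head h (.single h'))

theorem isDAG.anc_antisymm (hG : G.isDAG) (hij : G.anc i j) (hji : G.anc j i) : i = j := by
  rcases Relation.reflTransGen_iff_eq_or_transGen.mp hij with h | h
  · exact h.symm
  · exact (hG.2.2 i (h.trans_left hji)).elim

theorem isDAG.not_collider_of_arrow_left (hG : G.isDAG) (h : G.arrow b a) :
    ¬ G.collider a b c :=
  fun hc => hG.arrow_asymm h (hG.collider_iff.mp hc).1

theorem isDAG.not_collider_of_arrow_right (hG : G.isDAG) (h : G.arrow b c) :
    ¬ G.collider a b c :=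
  fun hc => hG.arrow_asymm h (hG.collider_iff.mp hc).2

/-- No collider can follow, as it would close a directed cycle through `k`. -/
theorem isDAG.anc_of_active_parents (hG : G.isDAG) :
    ∀ {a b x : V} {t : List V}, G.arrow a b → G.anc k b → (a :: b :: t).IsChain G.adj →
      (a :: b :: t).IsTripleChain (G.activeTriple {v | G.arrow v k}) →
      (a :: b :: t).getLast? = some x → G.anc k x
  | _, _, _, [], _, hkb, _, _, hx => by
    obtain rfl := by simpa using hx
    exact hkb
  | _, b, _, c :: t, hab, hkb, hch, hact, hx => by
    rcases hG.adj_iff.mp (isChain_cons_cons.mp hch.tail).1 with hbc | hcb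
    · exact hG.anc_of_active_parents hbc (hkb.tail hbc) hch.tail hact.2
        (by rwa [getLast?_cons_cons] at hx)
    · obtain ⟨y, hyk, hby⟩ := hact.1.exists_anc (hG.collider_iff.mpr ⟨hab, hcb⟩)
      exact (hG.2.2 k (.tail' (hkb.trans hby) hyk)).elim

theorem isDAG.mSep_parents (hG : G.isDAG) (hik : ¬ G.adj i k) (hki : ¬ G.anc k i) :
    G.mSep {k} {i} {v | G.arrow v k} := by
  rintro ⟨k', i', p, hk', hi', hp⟩
  simp only [Set.mem_singleton_iff] at hk' hi'
  subst k' i'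
  obtain ⟨hpath, hact⟩ := mConnecting_iff.mp hp
  obtain ⟨y, t, rfl⟩ := hpath.exists_eq_cons_cons
  obtain ⟨hp', -, -, hi⟩ := hpath
  have hch := (isPath_iff.mp hp').2
  rcases hG.adj_iff.mp (isChain_cons_cons.mp hch).1 with hky | hyk
  · exact hki (hG.anc_of_active_parents hky (.single hky) hch hact hi)
  · cases t with
    | nil =>
      obtain rfl : y = i := by simpa using hi
      exact hik (.inr (.inl hyk))
    | cons z t => exact hact.1.2 (hG.not_collider_of_arrow_left hyk) hyk

theorem isDAG.not_unshieldedCollision_of_markovEquiv (hG : G.isDAG) (hU : U.isUG)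
    (h : G.markovEquiv U) : ¬ G.unshieldedCollision i j k := by
  intro hijk
  wlog hki : ¬ G.anc k i generalizing i k
  · exact this hijk.symm fun hik => hijk.2.2.1 (hG.anc_antisymm hik (not_not.mp hki))
  obtain ⟨hij, hkj, hne, hnadj⟩ := hijk
  have hi : i ∉ {v | G.arrow v k} := fun hik : G.arrow i k => hnadj (.inr (.inl hik))
  have hsep : U.mSep {k} {i} {v | G.arrow v k} :=
    (h.mSep_singleton_iff (C := {v | G.arrow v k}) hne.symm (G.arrow_irrefl k) hi).mp
      (hG.mSep_parents hnadj hki)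
  have hkjU : U.adj k j := h.adj_of_isUG hU (.inr (.inl hkj))
  have hjiU : U.adj j i := h.adj_of_isUG hU (.inr (.inr (.inl hij)))
  have hnd : [k, j, i].Nodup := by simp [ne_of_adj hkjU, ne_of_adj hjiU, hne.symm]
  exact hsep ⟨k, i, [k, j, i], rfl, rfl, hU.mConnecting_iff.mpr
    ⟨⟨isPath_iff.mpr ⟨hnd, by simp [hkjU, hjiU]⟩, by simp, rfl, rfl⟩,
      hG.arrow_asymm hkj, trivial⟩⟩

/-- Bypassing a collider `a → b ← c` preserves activity: `b` being an ancestor of `C`, so are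
`a` and `c`, and as parents of `b` they were non-colliders, hence outside `C`. -/
theorem isDAG.activeTriple_shortcut (hG : G.isDAG) (hab : G.arrow a b) (hcb : G.arrow c b)
    (habc : G.activeTriple C a b c) :
    (∀ x, G.activeTriple C x a b → G.activeTriple C x a c) ∧
      (∀ d, G.activeTriple C b c d → G.activeTriple C a c d) := by
  obtain ⟨y, hy, hby⟩ := habc.exists_anc (hG.collider_iff.mpr ⟨hab, hcb⟩)
  exact ⟨fun _ hx => ⟨fun _ => .inr ⟨y, hy, .head hab hby⟩,
      fun _ => hx.2 (hG.not_collider_of_arrow_right hab)⟩,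
    fun _ hd => ⟨fun _ => .inr ⟨y, hy, .head hcb hby⟩,
      fun _ => hd.2 (hG.not_collider_of_arrow_left hcb)⟩⟩

theorem isDAG.exists_isPathBetween_not_collider (hG : G.isDAG)
    (hnc : ∀ i j k, ¬ G.unshieldedCollision i j k) {Q : V → V → V → Prop}
    (hQ : ∀ a b c, G.arrow a b → G.arrow c b → Q a b c →
      (∀ x, Q x a b → Q x a c) ∧ (∀ d, Q b c d → Q a c d))
    {p : List V} (hp : G.isPathBetween i j p) (hpQ : p.IsTripleChain Q) :
    ∃ q, G.isPathBetween i j q ∧ q.IsTripleChain Q ∧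
      q.IsTripleChain fun a b c => ¬ G.collider a b c := by
  obtain ⟨q, ⟨hq, hqQ⟩, hfree⟩ := exists_isTripleChain_of_shortcut
    (P := fun q => G.isPathBetween i j q ∧ q.IsTripleChain Q)
    (Q := fun a b c => ¬ G.collider a b c)
    (fun u a b c v ⟨hp, hpQ⟩ hcol => by
      obtain ⟨hab, hcb⟩ := hG.collider_iff.mp (not_not.mp hcol)
      have hac : a ≠ c := by
        have := (nodup_append.mp (isPath_iff.mp hp.1).1).2.1
        simp only [nodup_cons, mem_cons] at this
        tauto
      have hadj : G.adj a c := by_contra fun h => hnc a b c ⟨hab, hcb, hac, h⟩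
      obtain ⟨hl, hr⟩ := hQ a b c hab hcb hpQ.of_append_cons_cons_cons
      exact ⟨hp.shortcut hadj, hpQ.shortcut hl hr⟩) p ⟨hp, hpQ⟩
  exact ⟨q, hq, hqQ, hfree⟩

theorem isDAG.exists_mConnecting_iff (hG : G.isDAG)
    (hnc : ∀ i j k, ¬ G.unshieldedCollision i j k) :
    (∃ p, G.mConnecting C i j p) ↔
      ∃ p, G.isPathBetween i j p ∧ p.IsTripleChain (fun _ b _ => b ∉ C) := by
  simp only [mConnecting_iff]
  constructor
  · rintro ⟨p, hp, hact⟩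
    obtain ⟨q, hq, hact', hfree⟩ := hG.exists_isPathBetween_not_collider hnc
      (fun _ _ _ hab hcb => hG.activeTriple_shortcut hab hcb) hp hact
    exact ⟨q, hq, hact'.imp₂ (fun _ _ _ h hc => h.2 hc) hfree⟩
  · rintro ⟨p, hp, hout⟩
    obtain ⟨q, hq, hout', hfree⟩ := hG.exists_isPathBetween_not_collider hnc
      (fun _ _ _ _ _ _ => ⟨fun _ => id, fun _ => id⟩) hp hout
    exact ⟨q, hq, hout'.imp₂ (fun _ _ _ h hc => ⟨(absurd · hc), fun _ => h⟩) hfree⟩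

def skeleton (G : MixedGraph V) : MixedGraph V where
  line := G.adj
  arrow _ _ := False
  arc _ _ := False
  line_symm _ _ := adj_symm
  arc_symm _ _ := id
  line_irrefl := G.adj_irrefl
  arrow_irrefl _ := id
  arc_irrefl _ := id

theorem skeleton_isUG : G.skeleton.isUG :=
  ⟨fun _ _ => id, fun _ _ => id⟩

theorem skeleton_adj : G.skeleton.adj = G.adj := by
  funext i j
  simp [adj, skeleton]

theorem isDAG.markovEquiv_skeleton (hG : G.isDAG)
    (hnc : ∀ i j k, ¬ G.unshieldedCollision i j k) : G.markovEquiv G.skeleton := by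
  intro A B C _ _ _
  have hconn : ∀ i j, (∃ p, G.mConnecting C i j p) ↔ ∃ p, G.skeleton.mConnecting C i j p :=
    fun i j => by
      simp only [hG.exists_mConnecting_iff hnc, skeleton_isUG.mConnecting_iff,
        isPathBetween_congr_adj skeleton_adj]
  simp only [mSep, exists_and_left, hconn]

end MixedGraph

theorem dag_equiv_some_ug_iff_general {V : Type*} (G : MixedGraph V)
    (hG : G.isDAG) :
    (∃ U : MixedGraph V, U.isUG ∧ G.markovEquiv U) ↔
      ¬ ∃ i j k, G.unshieldedCollision i j k := by
  constructor
  · rintro ⟨U, hU, hGU⟩ ⟨i, j, k, hijk⟩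
    exact hG.not_unshieldedCollision_of_markovEquiv hU hGU hijk
  · intro h
    exact ⟨G.skeleton, MixedGraph.skeleton_isUG,
      hG.markovEquiv_skeleton fun i j k hijk => h ⟨i, j, k, hijk⟩⟩

/-- A DAG is Markov equivalent to some undirected graph iff it contains no
unshielded collision V-configuration. -/
theorem dag_equiv_some_ug_iff {V : Type*} [Fintype V] (G : MixedGraph V)
    (hG : G.isDAG) :
    (∃ U : MixedGraph V, U.isUG ∧ G.markovEquiv U) ↔
      ¬ ∃ i j k, G.unshieldedCollision i j k :=
  dag_equiv_some_ug_iff_general G hG
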